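/- arXiv:1707.09712 — 3 statements merged into one kernel-verified Lean document; each statement's English description precedes it below -/
import Mathlib

section
/- The dual lattice L' of L (with respect to the bilinear form (X,Y) = -p·tr(XY)) is exactly the set of matrices [[b/(2p), -a/p],[c, -b/(2p)]] with a, b, c ∈ ℤ. -/
/-!
Pairing `x = [[α, β], [γ, -α]]` with the lattice vector of coordinates `(a, b, c)` gives
`-p·tr(x·l) = aγ - 2pαb - pβc`, so `x ∈ L'` iff `γ`, `2pα` and `pβ` are integers; testing against
the three coordinate vectors of `L` reads these integers off.
-/

open Matrix

theorem neg_mul_trace_mul_eq {K : Type*} [Field K] {p : K} (hp : p ≠ 0)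
    (x : Matrix (Fin 2) (Fin 2) K) (a b c : K) :
    -p * (x * !![b, -a / p; c, -b]).trace =
      a * x 1 0 - p * b * (x 0 0 - x 1 1) - p * c * x 0 1 := by
  simp only [trace_fin_two, mul_apply, Fin.sum_univ_two, of_apply, cons_val', cons_val_zero,
    cons_val_one, empty_val', cons_val_fin_one]
  field_simp
  ring

theorem exists_eq_of_trace_eq_zero_of_forall_pairing_int {p : ℚ} (hp : p ≠ 0)
    {x : Matrix (Fin 2) (Fin 2) ℚ} (htr : x.trace = 0)
    (h : ∀ a b c : ℤ, ∃ n : ℤ, -p * (x * !![(b : ℚ), -(a : ℚ) / p; (c : ℚ), -(b : ℚ)]).trace = n) :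
    ∃ a b c : ℤ, x = !![(b : ℚ) / (2 * p), -(a : ℚ) / p; (c : ℚ), -(b : ℚ) / (2 * p)] := by
  rw [trace_fin_two] at htr
  obtain ⟨c, hc⟩ := h 1 0 0
  obtain ⟨b, hb⟩ := h 0 1 0
  obtain ⟨a, ha⟩ := h 0 0 1
  simp only [neg_mul_trace_mul_eq hp, Int.cast_zero, Int.cast_one] at ha hb hc
  have h00 : x 0 0 = -b / (2 * p) := by field_simp; linear_combination p * htr - hb
  have h01 : x 0 1 = -a / p := by field_simp; linear_combination -ha
  have h10 : x 1 0 = c := by linear_combination hc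
  have h11 : x 1 1 = b / (2 * p) := by field_simp; linear_combination p * htr + hb
  refine ⟨a, -b, c, ?_⟩
  rw [eta_fin_two x, h00, h01, h10, h11]
  push_cast
  ring_nf

theorem neg_mul_trace_mul_eq_intCast {p : ℚ} (hp : p ≠ 0) (a b c a' b' c' : ℤ) :
    -p * (!![(b : ℚ) / (2 * p), -(a : ℚ) / p; (c : ℚ), -(b : ℚ) / (2 * p)] *
        !![(b' : ℚ), -(a' : ℚ) / p; (c' : ℚ), -(b' : ℚ)]).trace =
      ((a' * c + a * c' - b * b' : ℤ) : ℚ) := by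
  rw [neg_mul_trace_mul_eq hp]
  simp only [of_apply, cons_val', cons_val_zero, cons_val_one, empty_val', cons_val_fin_one]
  push_cast
  field_simp
  ring

/-- Let `p` be a prime, let `V` be the space of trace-zero `2 × 2` rational
matrices with quadratic form `Q(X) = p·det X` and bilinear form `(X, Y) = -p·tr(X·Y)`, and let
`L` be the lattice of matrices `[[b, -a/p], [c, -b]]` with `a, b, c ∈ ℤ`.  Then the dual lattice
`L' = {x ∈ V : (x, l) ∈ ℤ for all l ∈ L}` is exactly the set of matrices
`[[b/(2p), -a/p], [c, -b/(2p)]]` with `a, b, c ∈ ℤ`. -/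
theorem dual_lattice_eq (p : ℕ) (hp : p.Prime) :
    {x : Matrix (Fin 2) (Fin 2) ℚ | x.trace = 0 ∧
        ∀ l ∈ {y : Matrix (Fin 2) (Fin 2) ℚ |
            ∃ a b c : ℤ, y = !![(b : ℚ), -(a : ℚ) / p; (c : ℚ), -(b : ℚ)]},
          ∃ n : ℤ, -(p : ℚ) * (x * l).trace = (n : ℚ)} =
    {x : Matrix (Fin 2) (Fin 2) ℚ |
        ∃ a b c : ℤ, x = !![(b : ℚ) / (2 * p), -(a : ℚ) / p; (c : ℚ), -(b : ℚ) / (2 * p)]} := by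
  have hp0 : (p : ℚ) ≠ 0 := Nat.cast_ne_zero.mpr hp.ne_zero
  ext x
  constructor
  · rintro ⟨htr, h⟩
    exact exists_eq_of_trace_eq_zero_of_forall_pairing_int hp0 htr
      fun a b c => h _ ⟨a, b, c, rfl⟩
  · rintro ⟨a, b, c, rfl⟩
    refine ⟨by simp [trace_fin_two, neg_div], ?_⟩
    rintro _ ⟨a', b', c', rfl⟩
    exact ⟨_, neg_mul_trace_mul_eq_intCast hp0 a b c a' b' c'⟩
end

section
/- For every x ∈ L' there exists a unique η ∈ {0, 1, ..., 2p-1} such that x - [[η/(2p), 0],[0, -η/(2p)]] ∈ L. Consequently the quotient group L'/L is cyclic of order 2p, generated by the class of [[1/(2p), 0],[0, -1/(2p)]]. -/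
/-!
Pairing `x ∈ L'` with the generators `!![1, 0; 0, -1]`, `!![0, 0; 1, 0]` and `!![0, -1/p; 0, 0]`
of `L` shows `x 0 0 ∈ (2p)⁻¹ℤ`, `x 0 1 ∈ p⁻¹ℤ`, `x 1 0 ∈ ℤ`, and `x 1 1 = -x 0 0` by the trace
condition. Hence `x ≡ diag(m/2p, -m/2p) (mod L)` for some `m ∈ ℤ`. As `diag(t, -t) ∈ L` exactly
when `t ∈ ℤ`, the class of `diag(k/2p, -k/2p)` is trivial iff `2p ∣ k`, and `η` is the residue of
`m` modulo `2p`.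
-/

open Matrix

theorem Int.existsUnique_lt_dvd_sub {n : ℕ} (hn : 0 < n) (m : ℤ) :
    ∃! η : ℕ, η < n ∧ (n : ℤ) ∣ m - η := by
  have hn' : (0 : ℤ) < n := by exact_mod_cast hn
  have hlt := Int.emod_lt_of_pos m hn'
  refine ⟨(m % n).toNat, ⟨by omega, ?_⟩, ?_⟩
  · rw [Int.toNat_of_nonneg (Int.emod_nonneg m hn'.ne')]
    exact Int.modEq_iff_dvd.mp (Int.mod_modEq m n)
  · rintro η ⟨hη, hdvd⟩
    have hmod : (η : ℤ) % n = m % n := Int.modEq_iff_dvd.mpr hdvd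
    rw [Int.emod_eq_of_lt (by positivity) (by exact_mod_cast hη)] at hmod
    omega

theorem Matrix.trace_mul_fin_two {R : Type*} [NonUnitalNonAssocSemiring R]
    (x : Matrix (Fin 2) (Fin 2) R) (a b c d : R) :
    (x * !![a, b; c, d]).trace = x 0 0 * a + x 0 1 * c + x 1 0 * b + x 1 1 * d := by
  rw [eta_fin_two x, mul_fin_two, trace_fin_two_of]
  simp only [of_apply, cons_val', cons_val_zero, cons_val_one, cons_val_fin_one, empty_val']
  exact (add_assoc _ _ _).symm

namespace TraceZeroLattice

def lattice (p : ℕ) : AddSubgroup (Matrix (Fin 2) (Fin 2) ℚ) where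
  carrier := {y | ∃ a b c : ℤ, y = !![(b : ℚ), -(a : ℚ) / p; (c : ℚ), -(b : ℚ)]}
  add_mem' := by
    rintro _ _ ⟨a, b, c, rfl⟩ ⟨a', b', c', rfl⟩
    refine ⟨a + a', b + b', c + c', ?_⟩
    ext i j; fin_cases i <;> fin_cases j <;> simp <;> ring
  zero_mem' := ⟨0, 0, 0, by ext i j; fin_cases i <;> fin_cases j <;> simp⟩
  neg_mem' := by
    rintro _ ⟨a, b, c, rfl⟩
    refine ⟨-a, -b, -c, ?_⟩
    ext i j; fin_cases i <;> fin_cases j <;> simp [neg_div]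

def traceZeroDiag (t : ℚ) : Matrix (Fin 2) (Fin 2) ℚ := !![t, 0; 0, -t]

theorem traceZeroDiag_sub (s t : ℚ) :
    traceZeroDiag s - traceZeroDiag t = traceZeroDiag (s - t) := by
  ext i j; fin_cases i <;> fin_cases j <;> simp [traceZeroDiag, neg_add_eq_sub]

theorem traceZeroDiag_mem_lattice_iff (p : ℕ) (t : ℚ) :
    traceZeroDiag t ∈ lattice p ↔ ∃ b : ℤ, t = b := by
  constructor
  · rintro ⟨a, b, c, h⟩
    exact ⟨b, by simpa [traceZeroDiag] using congrFun (congrFun h 0) 0⟩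
  · rintro ⟨b, rfl⟩
    exact ⟨0, b, 0, by ext i j; fin_cases i <;> fin_cases j <;> simp [traceZeroDiag]⟩

theorem traceZeroDiag_intCast_div_mem_lattice_iff {p : ℕ} (hp : p ≠ 0) (k : ℤ) :
    traceZeroDiag (k / (2 * p)) ∈ lattice p ↔ 2 * (p : ℤ) ∣ k := by
  have h2p : (2 * p : ℚ) ≠ 0 := by positivity
  rw [traceZeroDiag_mem_lattice_iff]
  refine exists_congr fun b => ?_
  rw [div_eq_iff h2p, eq_comm, mul_comm]
  exact_mod_cast eq_comm

theorem exists_sub_traceZeroDiag_mem_lattice {p : ℕ} (hp : p ≠ 0) {x : Matrix (Fin 2) (Fin 2) ℚ}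
    (htr : x.trace = 0) (hx : ∀ l ∈ lattice p, ∃ n : ℤ, -(p : ℚ) * (x * l).trace = n) :
    ∃ m : ℤ, x - traceZeroDiag (m / (2 * p)) ∈ lattice p := by
  have hp' : (p : ℚ) ≠ 0 := by exact_mod_cast hp
  rw [trace_fin_two] at htr
  have h11 : x 1 1 = -x 0 0 := by linarith
  obtain ⟨m, hm⟩ := hx !![1, 0; 0, -1] ⟨0, 1, 0, by simp⟩
  obtain ⟨a, ha⟩ := hx !![0, 0; 1, 0] ⟨0, 0, 1, by simp⟩
  obtain ⟨c, hc⟩ := hx !![0, -1 / p; 0, 0] ⟨1, 0, 0, by simp⟩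
  rw [trace_mul_fin_two, h11] at hm
  rw [trace_mul_fin_two] at ha hc
  have h00 : x 0 0 = -m / (2 * p) := by field_simp; linarith
  have h01 : x 0 1 = -a / p := by field_simp; linarith
  have h10 : x 1 0 = c := by field_simp at hc; linarith
  refine ⟨-m, a, 0, c, ?_⟩
  rw [eta_fin_two x]
  ext i j; fin_cases i <;> fin_cases j <;> simp [traceZeroDiag, h00, h01, h10, h11]

theorem sub_traceZeroDiag_mem_lattice_iff {p : ℕ} (hp : p ≠ 0) {x : Matrix (Fin 2) (Fin 2) ℚ}
    {m : ℤ} (hm : x - traceZeroDiag (m / (2 * p)) ∈ lattice p) (k : ℤ) :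
    x - traceZeroDiag (k / (2 * p)) ∈ lattice p ↔ 2 * (p : ℤ) ∣ m - k := by
  have hsplit : x - traceZeroDiag (k / (2 * p)) =
      (x - traceZeroDiag (m / (2 * p))) + traceZeroDiag ((m - k : ℤ) / (2 * p)) := by
    rw [sub_add, traceZeroDiag_sub]
    congr 2
    push_cast
    ring
  rw [hsplit, add_mem_cancel_left hm, traceZeroDiag_intCast_div_mem_lattice_iff hp]

end TraceZeroLattice

open TraceZeroLattice in
/-- With `L` the lattice of trace-zero matrices `[[b, -a/p], [c, -b]]`
(`a, b, c ∈ ℤ`) and `L'` its dual lattice with respect to `(X, Y) = -p·tr(X·Y)`: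
for every `x ∈ L'` there exists a unique `η ∈ {0, 1, …, 2p - 1}` such that
`x - [[η/(2p), 0], [0, -η/(2p)]] ∈ L`.  Consequently the quotient group `L'/L` is cyclic of
order `2p`, generated by the class of `gen = [[1/(2p), 0], [0, -1/(2p)]]`: every element of `L'`
is congruent modulo `L` to an integer multiple of `gen`, and `k • gen ∈ L` iff `2p ∣ k`. -/
theorem dual_mod_lattice_cyclic (p : ℕ) (hp : p.Prime)
    (L : Set (Matrix (Fin 2) (Fin 2) ℚ))
    (hL : L = {y | ∃ a b c : ℤ, y = !![(b : ℚ), -(a : ℚ) / p; (c : ℚ), -(b : ℚ)]})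
    (L' : Set (Matrix (Fin 2) (Fin 2) ℚ))
    (hL' : L' = {x | x.trace = 0 ∧ ∀ l ∈ L, ∃ n : ℤ, -(p : ℚ) * (x * l).trace = (n : ℚ)}) :
    (∀ x ∈ L', ∃! η : ℕ, η < 2 * p ∧
        x - !![(η : ℚ) / (2 * p), 0; 0, -(η : ℚ) / (2 * p)] ∈ L) ∧
    (∀ x ∈ L', ∃ k : ℤ,
        x - k • !![(1 : ℚ) / (2 * p), 0; 0, -(1 : ℚ) / (2 * p)] ∈ L) ∧
    (∀ k : ℤ, k • !![(1 : ℚ) / (2 * p), 0; 0, -(1 : ℚ) / (2 * p)] ∈ L ↔ (2 * (p : ℤ)) ∣ k) := by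
  have hL₀ : L = lattice p := hL
  subst hL₀ hL'
  have hp₀ : p ≠ 0 := hp.ne_zero
  have hdiag (η : ℕ) : !![(η : ℚ) / (2 * p), 0; 0, -(η : ℚ) / (2 * p)] =
      traceZeroDiag (((η : ℤ) : ℚ) / (2 * p)) := by
    simp [traceZeroDiag, neg_div]
  have hgen (k : ℤ) :
      k • !![(1 : ℚ) / (2 * p), 0; 0, -(1 : ℚ) / (2 * p)] = traceZeroDiag (k / (2 * p)) := by
    ext i j; fin_cases i <;> fin_cases j <;> simp [traceZeroDiag, div_eq_mul_inv]
  refine ⟨fun x ⟨htr, hx⟩ => ?_, fun x ⟨htr, hx⟩ => ?_, fun k => ?_⟩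
  · obtain ⟨m, hm⟩ := exists_sub_traceZeroDiag_mem_lattice hp₀ htr hx
    simp only [hdiag, SetLike.mem_coe, sub_traceZeroDiag_mem_lattice_iff hp₀ hm]
    exact_mod_cast Int.existsUnique_lt_dvd_sub (n := 2 * p) (by positivity) m
  · obtain ⟨m, hm⟩ := exists_sub_traceZeroDiag_mem_lattice hp₀ htr hx
    exact ⟨m, by rwa [hgen]⟩
  · rw [hgen]
    exact traceZeroDiag_intCast_div_mem_lattice_iff hp₀ k
end

section
/- Suppose -D is a fundamental discriminant, i.e. either D ≡ 3 (mod 4) and D is squarefree, or 4 | D, D/4 is squarefree, and D/4 ≡ 1 or 2 (mod 4). Let K = ℚ(√-D), let φ : K → M₂(ℚ) be the ℚ-algebra homomorphism with φ(√-D) = [[μ, 2],[2pm, -μ]], and let R₀ = [[ℤ, ℤ],[pℤ, ℤ]] be the order of M₂(ℚ) consisting of integral matrices whose lower-left entry is divisible by p. Then φ⁻¹(R₀) equals the ring of integers O_K of K; equivalently, for v, w ∈ ℚ one has φ(v + w·(-D + √-D)/2) ∈ R₀ if and only if v, w ∈ ℤ. -/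
/-!
Every element of `K = ℚ(√-D)` is `a + b θ` with `a, b ∈ ℚ` and `θ = (-D + √-D)/2`. Since `φ(θ)` is
an integral matrix with upper-right entry `1`, `φ(a + b θ) ∈ R₀` exactly when `a, b ∈ ℤ`. On the
other side, `θ` is integral because `D ≡ 0, 3 (mod 4)`; conversely, if `a + b θ = v + w √-D` is
integral then its trace `2v` and norm `v² + D w²` are integers, and the fundamental discriminant
condition forces `v + D w = a` and `2w = b` to be integers.
-/

open Matrix Polynomial

theorem Squarefree.exists_int_eq_of_mul_sq_eq {d : ℤ} (hd : Squarefree d) {q : ℚ} {k : ℤ}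
    (hk : d * q ^ 2 = k) : ∃ n : ℤ, q = n := by
  have hint : IsIntegral ℤ ((d : ℚ) * q) := by
    refine ⟨X ^ 2 - C (d * k), monic_X_pow_sub_C _ two_ne_zero, ?_⟩
    rw [eval₂_sub, eval₂_pow, eval₂_X, eval₂_C, eq_intCast, Int.cast_mul]
    linear_combination (d : ℚ) * hk
  obtain ⟨b, hb⟩ := IsIntegrallyClosed.isIntegral_iff.mp hint
  have hb' : (b : ℚ) = d * q := hb
  obtain ⟨e, rfl⟩ : d ∣ b := (hd.dvd_pow_iff_dvd two_ne_zero).mp ⟨k, by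
    exact_mod_cast (show (b : ℚ) ^ 2 = d * k by rw [hb', ← hk]; ring)⟩
  refine ⟨e, mul_left_cancel₀ (Int.cast_ne_zero.mpr hd.ne_zero : (d : ℚ) ≠ 0) ?_⟩
  rw [← hb']
  push_cast
  ring

theorem Int.two_dvd_add_mul_of_two_dvd_sq_add_mul_sq {D a c : ℤ} (hD : Odd D)
    (h : 2 ∣ a ^ 2 + D * c ^ 2) : 2 ∣ a + D * c := by
  simp only [← even_iff_two_dvd, Int.even_add, Int.even_mul, Int.even_pow] at h ⊢
  simp only [← Int.not_odd_iff_even, hD] at h ⊢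
  tauto

theorem Int.two_dvd_of_four_dvd_sq_add_mul_sq {d a c : ℤ} (hd : d % 4 = 1 ∨ d % 4 = 2)
    (h : 4 ∣ a ^ 2 + d * c ^ 2) : 2 ∣ a ∧ 2 ∣ c := by
  have two_dvd_of_zmod : ∀ x : ℤ, (2 * x : ZMod 4) = 0 → 2 ∣ x := fun x hx =>
    (mul_dvd_mul_iff_left two_ne_zero).mp <|
      (ZMod.intCast_zmod_eq_zero_iff_dvd (2 * x) 4).mp (by push_cast; exact hx)
  have hd4 : (d : ZMod 4) = 1 ∨ (d : ZMod 4) = 2 := by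
    rw [← ZMod.intCast_mod d 4]
    rcases hd with hd | hd <;> simp [hd]
  have h4 : (a : ZMod 4) ^ 2 + d * c ^ 2 = 0 := by
    exact_mod_cast (ZMod.intCast_zmod_eq_zero_iff_dvd _ 4).mpr h
  have key : ∀ A C δ : ZMod 4, (δ = 1 ∨ δ = 2) → A ^ 2 + δ * C ^ 2 = 0 →
      2 * A = 0 ∧ 2 * C = 0 := by decide
  obtain ⟨ha, hc⟩ := key _ _ _ hd4 h4
  exact ⟨two_dvd_of_zmod a ha, two_dvd_of_zmod c hc⟩

def IsNegFundamentalDiscriminant (D : ℤ) : Prop :=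
  (D % 4 = 3 ∧ Squarefree D) ∨ (4 ∣ D ∧ Squarefree (D / 4) ∧ (D / 4 % 4 = 1 ∨ D / 4 % 4 = 2))

namespace IsNegFundamentalDiscriminant

theorem emod_four {D : ℤ} (hD : IsNegFundamentalDiscriminant D) : D % 4 = 0 ∨ D % 4 = 3 := by
  rcases hD with ⟨h, -⟩ | ⟨h, -⟩ <;> omega

theorem exists_int_of_trace_norm {D : ℤ} (hD : IsNegFundamentalDiscriminant D) {v w : ℚ}
    (htr : ∃ a : ℤ, 2 * v = a) (hnm : ∃ N : ℤ, v ^ 2 + D * w ^ 2 = N) :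
    (∃ n : ℤ, v + D * w = n) ∧ ∃ n : ℤ, 2 * w = n := by
  obtain ⟨a, ha⟩ := htr
  obtain ⟨N, hN⟩ := hnm
  rcases hD with ⟨hD3, hsq⟩ | ⟨⟨d, rfl⟩, hsq, hd⟩
  · obtain ⟨c, hc⟩ := hsq.exists_int_eq_of_mul_sq_eq (q := 2 * w) (k := 4 * N - a ^ 2)
      (by push_cast; linear_combination 4 * hN - (2 * v + a) * ha)
    have hac : a ^ 2 + D * c ^ 2 = 4 * N := by
      have : (a : ℚ) ^ 2 + D * c ^ 2 = 4 * N := by rw [← ha, ← hc]; linear_combination 4 * hN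
      exact_mod_cast this
    obtain ⟨t, ht⟩ := Int.two_dvd_add_mul_of_two_dvd_sq_add_mul_sq (by rw [Int.odd_iff]; omega)
      (show 2 ∣ a ^ 2 + D * c ^ 2 from ⟨2 * N, by rw [hac]; ring⟩)
    refine ⟨⟨t, ?_⟩, c, hc⟩
    have : (a : ℚ) + D * c = 2 * t := by exact_mod_cast ht
    linear_combination (ha + D * hc + this) / 2
  · rw [Int.mul_ediv_cancel_left _ four_ne_zero] at hsq hd
    obtain ⟨c, hc⟩ := hsq.exists_int_eq_of_mul_sq_eq (q := 4 * w) (k := 4 * N - a ^ 2)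
      (by push_cast at hN ⊢; linear_combination 4 * hN - (2 * v + a) * ha)
    have hac : a ^ 2 + d * c ^ 2 = 4 * N := by
      have : (a : ℚ) ^ 2 + d * c ^ 2 = 4 * N := by
        rw [← ha, ← hc]
        push_cast at hN
        linear_combination 4 * hN
      exact_mod_cast this
    obtain ⟨⟨a', rfl⟩, ⟨c', rfl⟩⟩ := Int.two_dvd_of_four_dvd_sq_add_mul_sq hd ⟨N, hac⟩
    push_cast at ha hc ⊢
    exact ⟨⟨a' + 2 * d * c', by push_cast; linear_combination ha / 2 + d * hc⟩,
      c', by linear_combination hc / 2⟩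

end IsNegFundamentalDiscriminant

theorem exists_int_coeff_minpoly_of_isIntegral {K : Type*} [Field K] [Algebra ℚ K] {x : K}
    (hx : IsIntegral ℤ x) (i : ℕ) : ∃ n : ℤ, (minpoly ℚ x).coeff i = n :=
  ⟨(minpoly ℤ x).coeff i, by
    rw [minpoly.isIntegrallyClosed_eq_field_fractions' ℚ hx, coeff_map, eq_intCast]⟩

section QuadraticField

variable {K : Type*} [Field K] [Algebra ℚ K] {D : ℤ} {ζ : K}

theorem minpoly_add_mul_eq_of_sq_eq (hζ2 : ζ ^ 2 = -D)
    (hζ : ζ ∉ Set.range (algebraMap ℚ K)) {v w : ℚ} (hw : w ≠ 0) :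
    minpoly ℚ (algebraMap ℚ K v + algebraMap ℚ K w * ζ) =
      X ^ 2 - C (2 * v) * X + C (v ^ 2 + D * w ^ 2) := by
  set x := algebraMap ℚ K v + algebraMap ℚ K w * ζ
  have hx : IsIntegral ℚ x := .add isIntegral_algebraMap <| isIntegral_algebraMap.mul
    ⟨X ^ 2 + C (D : ℚ), monic_X_pow_add_C _ two_ne_zero, by rw [← aeval_def]; simp [hζ2]⟩
  have hxℚ : x ∉ Set.range (algebraMap ℚ K) := by
    rintro ⟨c, hc⟩
    refine hζ ⟨(c - v) / w, ?_⟩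
    rw [map_div₀, map_sub, div_eq_iff ((_root_.map_ne_zero _).mpr hw), hc]
    ring
  have hmonic : (X ^ 2 - C (2 * v) * X + C (v ^ 2 + D * w ^ 2)).Monic := by monicity!
  have hdeg : (X ^ 2 - C (2 * v) * X + C (v ^ 2 + D * w ^ 2)).natDegree = 2 := by
    compute_degree!
  symm
  refine minpoly.unique_of_degree_le_degree_minpoly _ _ hmonic ?_ ?_
  · simp only [map_add, map_sub, map_mul, map_pow, aeval_X, aeval_C, x, map_ofNat, map_intCast]
    linear_combination algebraMap ℚ K w ^ 2 * hζ2
  · rw [degree_eq_natDegree hmonic.ne_zero, degree_eq_natDegree (minpoly.ne_zero hx), hdeg]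
    exact_mod_cast (minpoly.two_le_natDegree_iff hx).mpr hxℚ

theorem exists_int_trace_norm_of_isIntegral (hζ2 : ζ ^ 2 = -D)
    (hζ : ζ ∉ Set.range (algebraMap ℚ K)) {v w : ℚ}
    (hx : IsIntegral ℤ (algebraMap ℚ K v + algebraMap ℚ K w * ζ)) :
    (∃ a : ℤ, 2 * v = a) ∧ ∃ N : ℤ, v ^ 2 + D * w ^ 2 = N := by
  rcases eq_or_ne w 0 with rfl | hw
  · rw [map_zero, zero_mul, add_zero,
      isIntegral_algebraMap_iff (algebraMap ℚ K).injective] at hx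
    obtain ⟨n, hn⟩ := IsIntegrallyClosed.isIntegral_iff.mp hx
    obtain rfl : (n : ℚ) = v := hn
    exact ⟨⟨2 * n, by push_cast; ring⟩, n ^ 2, by push_cast; ring⟩
  · obtain ⟨a, ha⟩ := exists_int_coeff_minpoly_of_isIntegral hx 1
    obtain ⟨N, hN⟩ := exists_int_coeff_minpoly_of_isIntegral hx 0
    rw [minpoly_add_mul_eq_of_sq_eq hζ2 hζ hw] at ha hN
    simp only [coeff_add, coeff_sub, coeff_C, coeff_X_pow, coeff_C_mul, coeff_X] at ha hN
    norm_num at ha hN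
    exact ⟨⟨-a, by push_cast; linarith⟩, N, hN⟩

theorem isIntegral_half_neg_add_of_sq_eq (hζ2 : ζ ^ 2 = -D) (hD : D % 4 = 0 ∨ D % 4 = 3) :
    IsIntegral ℤ ((algebraMap ℚ K (-D) + ζ) / 2) := by
  have := algebraRat.charZero K
  obtain ⟨e, he⟩ : (4 : ℤ) ∣ D * (D + 1) := by
    rcases hD with hD | hD
    · exact (Int.dvd_of_emod_eq_zero hD).mul_right _
    · exact (Int.dvd_of_emod_eq_zero (by omega)).mul_left _
  refine ⟨X ^ 2 + C D * X + C e, by monicity!, ?_⟩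
  rw [← aeval_def]
  simp only [map_add, map_mul, map_pow, aeval_X, map_neg, map_intCast, eq_intCast]
  have he' : (D : K) * (D + 1) = 4 * e := by exact_mod_cast he
  linear_combination hζ2 / 4 - he' / 4

theorem isIntegral_add_mul_half_neg_add_iff (hD : IsNegFundamentalDiscriminant D)
    (hζ2 : ζ ^ 2 = -D) (hζ : ζ ∉ Set.range (algebraMap ℚ K)) (a b : ℚ) :
    IsIntegral ℤ (algebraMap ℚ K a + algebraMap ℚ K b * ((algebraMap ℚ K (-D) + ζ) / 2)) ↔
      (∃ n : ℤ, a = n) ∧ ∃ n : ℤ, b = n := by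
  constructor
  · intro hx
    have hvw : algebraMap ℚ K a + algebraMap ℚ K b * ((algebraMap ℚ K (-D) + ζ) / 2) =
        algebraMap ℚ K (a - D * b / 2) + algebraMap ℚ K (b / 2) * ζ := by
      simp only [map_sub, map_mul, map_div₀, map_neg, map_intCast, map_ofNat]
      ring
    rw [hvw] at hx
    obtain ⟨htr, hnm⟩ := exists_int_trace_norm_of_isIntegral hζ2 hζ hx
    obtain ⟨⟨n, hn⟩, ⟨n', hn'⟩⟩ := hD.exists_int_of_trace_norm htr hnm
    exact ⟨⟨n, by linear_combination hn⟩, n', by linear_combination hn'⟩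
  · rintro ⟨⟨n, rfl⟩, ⟨n', rfl⟩⟩
    simp only [map_intCast]
    exact (isIntegral_intCast n).add <| (isIntegral_intCast n').mul <|
      isIntegral_half_neg_add_of_sq_eq hζ2 hD.emod_four

end QuadraticField

def eichlerOrder (p : ℕ) : Set (Matrix (Fin 2) (Fin 2) ℚ) :=
  {A | (∃ n : ℤ, A 0 0 = n) ∧ (∃ n : ℤ, A 0 1 = n) ∧ (∃ n : ℤ, A 1 0 = p * n) ∧
    ∃ n : ℤ, A 1 1 = n}

theorem algebraMap_add_algebraMap_mul_mem_eichlerOrder_iff (p : ℕ) (k₀ k₁ m : ℤ) (a b : ℚ) :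
    algebraMap ℚ _ a + algebraMap ℚ _ b * !![(k₀ : ℚ), 1; p * m, k₁] ∈ eichlerOrder p ↔
      (∃ n : ℤ, a = n) ∧ ∃ n : ℤ, b = n := by
  simp only [eichlerOrder, Fin.isValue, Algebra.algebraMap_eq_smul_one, Algebra.smul_mul_assoc,
    one_mul, smul_of, smul_cons, smul_eq_mul, mul_one, smul_empty, Set.mem_ofPred_eq,
    Matrix.add_apply, Matrix.smul_apply, one_apply_eq, of_apply, cons_val', cons_val_zero,
    cons_val_fin_one, ne_eq, zero_ne_one, not_false_eq_true, one_apply_ne, mul_zero, cons_val_one,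
    zero_add, one_ne_zero]
  constructor
  · rintro ⟨⟨n₀, h₀⟩, ⟨n₁, rfl⟩, -, -⟩
    exact ⟨⟨n₀ - n₁ * k₀, by push_cast; linear_combination h₀⟩, n₁, rfl⟩
  · rintro ⟨⟨n₀, rfl⟩, ⟨n₁, rfl⟩⟩
    exact ⟨⟨n₀ + n₁ * k₀, by push_cast; ring⟩, ⟨n₁, rfl⟩, ⟨n₁ * m, by push_cast; ring⟩,
      n₀ + n₁ * k₁, by push_cast; ring⟩

theorem map_half_neg_add_eq {K : Type*} [Field K] [Algebra ℚ K] {p : ℕ} {μ m D t : ℤ}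
    (hD : D = -(μ ^ 2 + 4 * p * m)) (ht : μ * (μ + 1) = 2 * t)
    (φ : K →ₐ[ℚ] Matrix (Fin 2) (Fin 2) ℚ) {ζ : K}
    (hφ : φ ζ = !![(μ : ℚ), 2; 2 * p * m, -(μ : ℚ)]) :
    φ ((algebraMap ℚ K (-D) + ζ) / 2) =
      !![((t + 2 * p * m : ℤ) : ℚ), 1; p * m, (t - μ + 2 * p * m : ℤ)] := by
  rw [div_eq_inv_mul, ← map_ofNat (algebraMap ℚ K), ← map_inv₀, map_mul, map_add, hφ,
    AlgHom.commutes, AlgHom.commutes, ← Algebra.smul_def, Algebra.algebraMap_eq_smul_one,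
    one_fin_two]
  simp only [smul_of, smul_cons, smul_empty, of_add_of, cons_add_cons, empty_add_empty,
    smul_eq_mul, EmbeddingLike.apply_eq_iff_eq, vecCons_inj, and_true]
  have ht' : (μ : ℚ) * (μ + 1) = 2 * t := by exact_mod_cast ht
  subst hD
  push_cast
  refine ⟨⟨?_, by ring⟩, by ring, ?_⟩ <;> linear_combination ht' / 2

theorem map_add_mul_half_neg_add_mem_eichlerOrder_iff {K : Type*} [Field K] [Algebra ℚ K]
    {p : ℕ} {μ m D : ℤ} (hD : D = -(μ ^ 2 + 4 * p * m)) (φ : K →ₐ[ℚ] Matrix (Fin 2) (Fin 2) ℚ)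
    {ζ : K} (hφ : φ ζ = !![(μ : ℚ), 2; 2 * p * m, -(μ : ℚ)]) (a b : ℚ) :
    φ (algebraMap ℚ K a + algebraMap ℚ K b * ((algebraMap ℚ K (-D) + ζ) / 2)) ∈ eichlerOrder p ↔
      (∃ n : ℤ, a = n) ∧ ∃ n : ℤ, b = n := by
  obtain ⟨t, ht⟩ : ∃ t, μ * (μ + 1) = 2 * t := even_iff_two_dvd.mp (Int.even_mul_succ_self μ)
  rw [map_add, map_mul, AlgHom.commutes, AlgHom.commutes, map_half_neg_add_eq hD ht φ hφ]
  exact algebraMap_add_algebraMap_mul_mem_eichlerOrder_iff p _ _ m a b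

open IntermediateField in
theorem IntermediateField.exists_eq_add_mul_gen_of_sq_eq {F E : Type*} [Field F] [Field E]
    [Algebra F E] {α : E} {c : F} (hα : α ^ 2 = algebraMap F E c) (x : F⟮α⟯) :
    ∃ a b : F, x = algebraMap F F⟮α⟯ a + algebraMap F F⟮α⟯ b * AdjoinSimple.gen F α := by
  have hroot : aeval α (X ^ 2 - C c) = 0 := by simp [hα]
  have hint : IsIntegral F α := ⟨X ^ 2 - C c, monic_X_pow_sub_C _ two_ne_zero, hroot⟩
  obtain ⟨f, hfdeg, rfl⟩ := (adjoin.powerBasis hint).exists_eq_aeval x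
  have hf : f.natDegree ≤ 1 := by
    have := natDegree_le_of_dvd (minpoly.dvd F α hroot) (X_pow_sub_C_ne_zero two_pos c)
    rw [adjoin.powerBasis_dim] at hfdeg
    rw [natDegree_X_pow_sub_C] at this
    omega
  obtain ⟨b, a, rfl⟩ := exists_eq_X_add_C_of_natDegree_le_one hf
  refine ⟨a, b, ?_⟩
  simp only [map_add, map_mul, aeval_C, aeval_X, adjoin.powerBasis_gen]
  exact add_comm _ _

theorem Complex.ofReal_sqrt_mul_I_sq {x : ℝ} (hx : 0 ≤ x) : ((√x : ℂ) * I) ^ 2 = -x := by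
  rw [mul_pow, I_sq, ← ofReal_pow, Real.sq_sqrt hx, mul_neg_one]

theorem Complex.ofReal_sqrt_mul_I_notMem_range_algebraMap {x : ℝ} (hx : 0 < x) :
    (√x : ℂ) * I ∉ Set.range (algebraMap ℚ ℂ) := by
  rintro ⟨q, hq⟩
  have := congrArg im hq
  simp only [eq_ratCast, ratCast_im, mul_im, ofReal_re, I_im, mul_one, ofReal_im, I_re, mul_zero,
    add_zero] at this
  exact (Real.sqrt_pos.mpr hx).ne this

theorem preimage_of_order_is_ring_of_integers_general (p : ℕ) (μ m : ℤ)
    (D : ℤ) (hD : D = -(μ ^ 2 + 4 * p * m)) (hDpos : 0 < D)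
    (hfund : (D % 4 = 3 ∧ Squarefree D) ∨
      (4 ∣ D ∧ Squarefree (D / 4) ∧ (D / 4 % 4 = 1 ∨ D / 4 % 4 = 2)))
    (z : ℂ) (hz : z = Real.sqrt D * Complex.I)
    (K : IntermediateField ℚ ℂ) (hK : K = IntermediateField.adjoin ℚ {z})
    (zK : K) (hzK : (zK : ℂ) = z)
    (φ : K →ₐ[ℚ] Matrix (Fin 2) (Fin 2) ℚ)
    (hφ : φ zK = !![(μ : ℚ), 2; 2 * p * m, -(μ : ℚ)])
    (R₀ : Set (Matrix (Fin 2) (Fin 2) ℚ))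
    (hR₀ : R₀ = {A | (∃ n : ℤ, A 0 0 = (n : ℚ)) ∧ (∃ n : ℤ, A 0 1 = (n : ℚ)) ∧
        (∃ n : ℤ, A 1 0 = (p : ℚ) * n) ∧ (∃ n : ℤ, A 1 1 = (n : ℚ))}) :
    (⇑φ ⁻¹' R₀ = (integralClosure ℤ K : Set K)) ∧
    (∀ v w : ℚ, φ (algebraMap ℚ K v + algebraMap ℚ K w * ((algebraMap ℚ K (-D) + zK) / 2)) ∈ R₀ ↔
        ((∃ n : ℤ, v = (n : ℚ)) ∧ (∃ n : ℤ, w = (n : ℚ)))) := by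
  subst hK
  obtain rfl : R₀ = eichlerOrder p := hR₀
  have hDℝ : (0 : ℝ) < D := by exact_mod_cast hDpos
  have hz2 : zK ^ 2 = -D := Subtype.ext <| by
    push_cast [hzK, hz]
    exact_mod_cast Complex.ofReal_sqrt_mul_I_sq hDℝ.le
  have hzℚ : zK ∉ Set.range (algebraMap ℚ _) := fun ⟨q, hq⟩ =>
    Complex.ofReal_sqrt_mul_I_notMem_range_algebraMap hDℝ ⟨q, by rw [← hz, ← hzK, ← hq]; rfl⟩
  have hmem := map_add_mul_half_neg_add_mem_eichlerOrder_iff hD φ hφ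
  refine ⟨Set.ext fun x => ?_, hmem⟩
  obtain ⟨v, w, hx⟩ := IntermediateField.exists_eq_add_mul_gen_of_sq_eq
    (show z ^ 2 = algebraMap ℚ ℂ (-D) by simpa [hzK] using congrArg Subtype.val hz2) x
  have hgen : IntermediateField.AdjoinSimple.gen ℚ z = zK := Subtype.ext hzK.symm
  have hθ : x = algebraMap ℚ _ (v + D * w) + algebraMap ℚ _ (2 * w) *
      ((algebraMap ℚ _ (-D) + zK) / 2) := by
    rw [hx, hgen]
    -- the two (defeq) `ℚ`-algebra structures on `ℚ⟮z⟯` in play are identified via `Rat.cast`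
    simp only [eq_ratCast]
    push_cast
    ring
  rw [hθ, Set.mem_preimage, SetLike.mem_coe, mem_integralClosure_iff, hmem,
    isIntegral_add_mul_half_neg_add_iff hfund hz2 hzℚ]

/-- Let `p` be prime, `μ, m ∈ ℤ` with `m ≠ 0`, `D = -(μ² + 4pm) > 0`, and
suppose `-D` is a fundamental discriminant.  Let `K = ℚ(√-D) = ℚ⟮z⟯ ⊆ ℂ` with `z = i√D`, let
`φ : K → M₂(ℚ)` be the `ℚ`-algebra homomorphism with `φ(√-D) = [[μ, 2], [2pm, -μ]]`, and let
`R₀ = [[ℤ, ℤ], [pℤ, ℤ]]`.  Then `φ⁻¹(R₀)` equals the ring of integers `O_K` of `K`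
(the integral closure of `ℤ` in `K`); equivalently, for `v, w ∈ ℚ` one has
`φ(v + w·(-D + √-D)/2) ∈ R₀` if and only if `v, w ∈ ℤ`. -/
theorem preimage_of_order_is_ring_of_integers (p : ℕ) (hp : p.Prime) (μ m : ℤ) (hm : m ≠ 0)
    (D : ℤ) (hD : D = -(μ ^ 2 + 4 * p * m)) (hDpos : 0 < D)
    (hfund : (D % 4 = 3 ∧ Squarefree D) ∨
      (4 ∣ D ∧ Squarefree (D / 4) ∧ (D / 4 % 4 = 1 ∨ D / 4 % 4 = 2)))
    (z : ℂ) (hz : z = Real.sqrt D * Complex.I)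
    (K : IntermediateField ℚ ℂ) (hK : K = IntermediateField.adjoin ℚ {z})
    (zK : K) (hzK : (zK : ℂ) = z)
    (φ : K →ₐ[ℚ] Matrix (Fin 2) (Fin 2) ℚ)
    (hφ : φ zK = !![(μ : ℚ), 2; 2 * p * m, -(μ : ℚ)])
    (R₀ : Set (Matrix (Fin 2) (Fin 2) ℚ))
    (hR₀ : R₀ = {A | (∃ n : ℤ, A 0 0 = (n : ℚ)) ∧ (∃ n : ℤ, A 0 1 = (n : ℚ)) ∧
        (∃ n : ℤ, A 1 0 = (p : ℚ) * n) ∧ (∃ n : ℤ, A 1 1 = (n : ℚ))}) :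
    (⇑φ ⁻¹' R₀ = (integralClosure ℤ K : Set K)) ∧
    (∀ v w : ℚ, φ (algebraMap ℚ K v + algebraMap ℚ K w * ((algebraMap ℚ K (-D) + zK) / 2)) ∈ R₀ ↔
        ((∃ n : ℤ, v = (n : ℚ)) ∧ (∃ n : ℤ, w = (n : ℚ)))) :=
  preimage_of_order_is_ring_of_integers_general p μ m D hD hDpos hfund z hz K hK zK hzK φ hφ R₀ hR₀
end
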